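/- For every node u ∈ V_A ∪ C_B and every node v ∈ V_B \ C_B, the weighted distance in G satisfies wdist_G(u, v) = min over x ∈ C_B of ( wdist_{G'_A}(u, x) + wdist_{G_B}(x, v) ), where the minimum over an empty set is ∞. -/

import Mathlib

open scoped ENNReal

/-- The weighted distance in the graph `H` with (extended-natural-valued)
weight function `w`: the infimum over all walks from `u` to `v` of the total
weight of the walk (the sum of the weights of its edges, counted with
multiplicity); it is `∞` when no walk exists. -/
noncomputable def wdist {V : Type*} (H : SimpleGraph V) (w : V → V → ℕ∞) (u v : V) : ℕ∞ :=
  ⨅ p : H.Walk u v, (p.darts.map (fun d => w d.fst d.snd)).sum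

/-- The subgraph of `G` induced on the vertex set `S` (kept on the same vertex
type: edges of `G` with both endpoints in `S`). -/
def inducedOn {V : Type*} (G : SimpleGraph V) (S : Set V) : SimpleGraph V :=
  SimpleGraph.fromRel (fun u v => G.Adj u v ∧ u ∈ S ∧ v ∈ S)

/-- `C_B`: the set of nodes of `V_B` incident to a cut edge (an edge of `G` with
one endpoint in `V_A` and the other in `V_B`). -/
def cutB {V : Type*} (G : SimpleGraph V) (VA VB : Set V) : Set V :=
  {v | v ∈ VB ∧ ∃ u ∈ VA, G.Adj u v}

/-- The virtual graph `G'_A`: its vertices are `V_A ∪ C_B`, with the edges of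
`G_A`, the cut edges, and an edge between every two distinct nodes of `C_B`. -/
def virtualA {V : Type*} (G : SimpleGraph V) (VA VB : Set V) : SimpleGraph V :=
  SimpleGraph.fromRel (fun u v =>
    (G.Adj u v ∧ u ∈ VA ∧ v ∈ VA) ∨
    (G.Adj u v ∧ u ∈ VA ∧ v ∈ cutB G VA VB) ∨
    (u ∈ cutB G VA VB ∧ v ∈ cutB G VA VB))

open Classical in
/-- The weight function `w'` of the virtual graph `G'_A`: the weight of an edge
between two nodes of `C_B` is the weighted distance between them in `G_B`, and
every other edge keeps its weight from `G`. -/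
noncomputable def virtualWeight {V : Type*} (G : SimpleGraph V) (w : V → V → ℕ)
    (VA VB : Set V) (u v : V) : ℕ∞ :=
  if u ∈ cutB G VA VB ∧ v ∈ cutB G VA VB then
    wdist (inducedOn G VB) (fun a b => (w a b : ℕ∞)) u v
  else (w u v : ℕ∞)

/-!
Lower bounds on distances come from potentials: a function `f` with `f a ≤ w a y + f y` along
every edge satisfies `f a ≤ wdist a b + f b`. Suitable distance-to-a-set potentials show that
`G'_A` computes the distances of `G` between nodes of `V_A ∪ C_B` (an excursion of a walk into
`V_B` leaves and re-enters it through `C_B`, so it is shortcut by a virtual edge), and that a walk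
from `V_A ∪ C_B` to `v ∈ V_B` enters `V_B` for the last time at some `x ∈ C_B` and then stays in
`G_B`. The upper bound is the triangle inequality, as every virtual edge weighs at least the
`G`-distance between its ends.
-/

section

open SimpleGraph

variable {V : Type*}

noncomputable def walkWeight {H : SimpleGraph V} (w : V → V → ℕ∞) {u v : V} (p : H.Walk u v) :
    ℕ∞ :=
  (p.darts.map fun d => w d.fst d.snd).sum

section wdist

variable {H K : SimpleGraph V} {w : V → V → ℕ∞}

@[simp] lemma walkWeight_nil (u : V) : walkWeight w (Walk.nil : H.Walk u u) = 0 := rfl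

@[simp] lemma walkWeight_cons {u y v : V} (h : H.Adj u y) (q : H.Walk y v) :
    walkWeight w (Walk.cons h q) = w u y + walkWeight w q := by
  simp [walkWeight]

lemma le_walkWeight_add_of_forall_adj {f : V → ℕ∞} (hf : ∀ a y, H.Adj a y → f a ≤ w a y + f y)
    {a b : V} (p : H.Walk a b) : f a ≤ walkWeight w p + f b := by
  induction p with
  | nil => simp
  | cons h q ih =>
    rw [walkWeight_cons, add_assoc]
    exact (hf _ _ h).trans (add_le_add_right ih _)

lemma le_wdist_add_of_forall_adj {f : V → ℕ∞} (hf : ∀ a y, H.Adj a y → f a ≤ w a y + f y)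
    (a b : V) : f a ≤ wdist H w a b + f b := by
  rw [wdist, ENat.iInf_add]
  exact le_iInf fun p => le_walkWeight_add_of_forall_adj hf p

@[simp] lemma wdist_self (u : V) : wdist H w u u = 0 :=
  nonpos_iff_eq_zero.1 (iInf_le_of_le Walk.nil (walkWeight_nil u).le)

lemma wdist_le_add_of_adj {a y : V} (h : H.Adj a y) (b : V) :
    wdist H w a b ≤ w a y + wdist H w y b := by
  rw [wdist, wdist, ENat.add_iInf]
  exact le_iInf fun q => iInf_le_of_le (Walk.cons h q) (walkWeight_cons h q).le

lemma wdist_le_of_adj {a b : V} (h : H.Adj a b) : wdist H w a b ≤ w a b := by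
  simpa using wdist_le_add_of_adj (w := w) h b

lemma wdist_triangle (a x b : V) : wdist H w a b ≤ wdist H w a x + wdist H w x b :=
  le_wdist_add_of_forall_adj (fun _ _ h => wdist_le_add_of_adj h b) a x

lemma wdist_le_wdist_of_forall_adj {w' : V → V → ℕ∞}
    (h : ∀ a b, K.Adj a b → wdist H w a b ≤ w' a b) (a b : V) :
    wdist H w a b ≤ wdist K w' a b := by
  simpa using le_wdist_add_of_forall_adj (f := fun a => wdist H w a b)
    (fun a y hay => (wdist_triangle a y b).trans (add_le_add_left (h a y hay) _)) a b

lemma wdist_anti (hHK : H ≤ K) (a b : V) : wdist K w a b ≤ wdist H w a b :=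
  wdist_le_wdist_of_forall_adj (fun _ _ h => wdist_le_of_adj (hHK h)) a b

lemma iInf_wdist_add_le_add_of_adj {T : Set V} {c : V → ℕ∞} {a y : V} (h : H.Adj a y) :
    ⨅ x ∈ T, wdist H w a x + c x ≤ w a y + ⨅ x ∈ T, wdist H w y x + c x := by
  rw [ENat.add_iInf₂]
  exact iInf₂_mono fun x _ => (add_le_add_left (wdist_le_add_of_adj h x) _).trans (add_assoc ..).le

lemma inducedOn_le (S : Set V) : inducedOn H S ≤ H := by
  intro a b hab
  rcases ((fromRel_adj _ _ _).1 hab).2 with ⟨h, -⟩ | ⟨h, -⟩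
  exacts [h, h.symm]

lemma inducedOn_adj {S : Set V} {a b : V} (h : H.Adj a b) (ha : a ∈ S) (hb : b ∈ S) :
    (inducedOn H S).Adj a b :=
  (fromRel_adj _ _ _).2 ⟨h.ne, Or.inl ⟨h, ha, hb⟩⟩

lemma iInf_wdist_add_wdist_inducedOn_le {U T : Set V}
    (hT : ∀ a y, H.Adj a y → a ∉ U → y ∈ U → y ∈ T) {a v : V} (ha : a ∉ U ∨ a ∈ T)
    (hv : v ∈ U) :
    ⨅ x ∈ T, wdist H w a x + wdist (inducedOn H U) w x v ≤ wdist H w a v := by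
  set g : V → ℕ∞ := fun a => ⨅ x ∈ T, wdist H w a x + wdist (inducedOn H U) w x v
  -- a walk to `v` either stays in `U` or enters `U` for the last time through `T`
  set ψ : V → ℕ∞ := fun a => min (⨅ _ : a ∈ U, wdist (inducedOn H U) w a v) (g a)
  have hψ : ∀ a y, H.Adj a y → ψ a ≤ w a y + ψ y := by
    intro a y h
    rw [← min_add_add_left]
    refine le_min ?_ ((min_le_right _ _).trans (iInf_wdist_add_le_add_of_adj h))
    rw [ENat.add_iInf]
    refine le_iInf fun hy => ?_
    by_cases haU : a ∈ U
    · exact (min_le_left _ _).trans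
        (iInf_le_of_le haU (wdist_le_add_of_adj (inducedOn_adj h haU hy) v))
    · exact (min_le_right _ _).trans
        (iInf₂_le_of_le y (hT a y h haU hy) (add_le_add_left (wdist_le_of_adj h) _))
  have hψv : ψ v = 0 := nonpos_iff_eq_zero.1 ((min_le_left _ _).trans (iInf_le_of_le hv (by simp)))
  have hgψ : g a ≤ ψ a :=
    le_min (le_iInf fun haU => ha.elim (absurd haU) fun haT => iInf₂_le_of_le a haT (by simp))
      le_rfl
  simpa [hψv] using hgψ.trans (le_wdist_add_of_forall_adj hψ a v)

end wdist

section virtualA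

variable {G : SimpleGraph V} {w : V → V → ℕ} {VA VB : Set V}

local notation "CB" => cutB G VA VB
local notation "dG" => wdist G (fun a b => (w a b : ℕ∞))
local notation "dB" => wdist (inducedOn G VB) (fun a b => (w a b : ℕ∞))
local notation "dV" => wdist (virtualA G VA VB) (virtualWeight G w VA VB)

lemma virtualA_adj_of_adj {a b : V} (h : G.Adj a b) (ha : a ∈ VA ∪ CB) (hb : b ∈ VA ∪ CB)
    (hab : ¬(a ∈ CB ∧ b ∈ CB)) : (virtualA G VA VB).Adj a b := by
  refine (fromRel_adj _ _ _).2 ⟨h.ne, ?_⟩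
  rcases ha with ha | ha <;> rcases hb with hb | hb
  · exact Or.inl (Or.inl ⟨h, ha, hb⟩)
  · exact Or.inl (Or.inr (Or.inl ⟨h, ha, hb⟩))
  · exact Or.inr (Or.inr (Or.inl ⟨h.symm, hb, ha⟩))
  · exact absurd ⟨ha, hb⟩ hab

lemma wdist_virtualA_le_add_of_adj {a y : V} (h : G.Adj a y) (ha : a ∈ VA ∪ CB)
    (hy : y ∈ VA ∪ CB) (hay : ¬(a ∈ CB ∧ y ∈ CB)) (b : V) : dV a b ≤ w a y + dV y b := by
  simpa [virtualWeight, hay] using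
    wdist_le_add_of_adj (w := virtualWeight G w VA VB) (virtualA_adj_of_adj h ha hy hay) b

lemma wdist_virtualA_le_wdist_inducedOn {a b : V} (ha : a ∈ CB) (hb : b ∈ CB) :
    dV a b ≤ dB a b := by
  rcases eq_or_ne a b with rfl | hne
  · simp
  · have hadj : (virtualA G VA VB).Adj a b :=
      (fromRel_adj _ _ _).2 ⟨hne, Or.inl (Or.inr (Or.inr ⟨ha, hb⟩))⟩
    simpa [virtualWeight, ha, hb] using wdist_le_of_adj (w := virtualWeight G w VA VB) hadj

lemma iInf_wdist_inducedOn_add_wdist_virtualA {a : V} (ha : a ∈ CB) (b : V) :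
    ⨅ z ∈ CB, dB a z + dV z b = dV a b :=
  le_antisymm (iInf₂_le_of_le a ha (by simp))
    (le_iInf₂ fun _ hz => (wdist_triangle _ _ _).trans
      (add_le_add_left (wdist_virtualA_le_wdist_inducedOn ha hz) _))

lemma wdist_le_virtualWeight {a b : V} (h : (virtualA G VA VB).Adj a b) :
    dG a b ≤ virtualWeight G w VA VB a b := by
  unfold virtualWeight
  split_ifs with hc
  · exact wdist_anti (inducedOn_le VB) a b
  · refine wdist_le_of_adj ?_
    rcases ((fromRel_adj _ _ _).1 h).2 with (⟨h, -⟩ | ⟨h, -⟩ | hab) | (⟨h, -⟩ | ⟨h, -⟩ | hba)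
    exacts [h, h, absurd hab hc, h.symm, h.symm, absurd hba.symm hc]

lemma wdist_le_wdist_virtualA (a b : V) : dG a b ≤ dV a b :=
  wdist_le_wdist_of_forall_adj (fun _ _ => wdist_le_virtualWeight) a b

lemma mem_cutB_of_adj (hunion : VA ∪ VB = Set.univ) {a y : V} (h : G.Adj a y) (ha : a ∉ VB)
    (hy : y ∈ VB) : y ∈ CB :=
  ⟨hy, a, (Set.eq_univ_iff_forall.1 hunion a).resolve_right ha, h⟩

lemma wdist_virtualA_le_wdist (hunion : VA ∪ VB = Set.univ) {a b : V} (ha : a ∉ VB ∨ a ∈ CB)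
    (hb : b ∉ VB ∨ b ∈ CB) : dV a b ≤ dG a b := by
  classical
  have hA : ∀ {a}, a ∉ VB → a ∈ VA ∪ CB := fun ha =>
    .inl ((Set.eq_univ_iff_forall.1 hunion _).resolve_right ha)
  let φ : V → ℕ∞ := fun a => if a ∈ VB then ⨅ z ∈ CB, dB a z + dV z b else dV a b
  have hφ : ∀ a, a ∉ VB ∨ a ∈ CB → φ a = dV a b := by
    rintro a (ha | ha)
    · simp [φ, ha]
    · simp only [φ, if_pos ha.1, iInf_wdist_inducedOn_add_wdist_virtualA ha]
  have hstep : ∀ a y, G.Adj a y → φ a ≤ w a y + φ y := by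
    intro a y h
    by_cases haB : a ∈ VB <;> by_cases hyB : y ∈ VB
    · simp only [φ, if_pos haB, if_pos hyB]
      exact iInf_wdist_add_le_add_of_adj (inducedOn_adj h haB hyB)
    · have haC := mem_cutB_of_adj hunion h.symm hyB haB
      rw [hφ a (.inr haC), hφ y (.inl hyB)]
      exact wdist_virtualA_le_add_of_adj h (.inr haC) (hA hyB) (fun h => hyB h.2.1) b
    · have hyC := mem_cutB_of_adj hunion h haB hyB
      rw [hφ a (.inl haB), hφ y (.inr hyC)]
      exact wdist_virtualA_le_add_of_adj h (hA haB) (.inr hyC) (fun h => haB h.1.1) b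
    · rw [hφ a (.inl haB), hφ y (.inl hyB)]
      exact wdist_virtualA_le_add_of_adj h (hA haB) (hA hyB) (fun h => haB h.1.1) b
  simpa [hφ a ha, hφ b hb] using le_wdist_add_of_forall_adj hstep a b

end virtualA

end

theorem wdist_eq_min_over_cutB_general {V : Type*}
    (G : SimpleGraph V) (w : V → V → ℕ)
    (VA VB : Set V) (hdisj : Disjoint VA VB) (hunion : VA ∪ VB = Set.univ)
    (u v : V) (hu : u ∈ VA ∪ cutB G VA VB) (hv : v ∈ VB \ cutB G VA VB) :
    wdist G (fun a b => (w a b : ℕ∞)) u v =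
      ⨅ x ∈ cutB G VA VB,
        wdist (virtualA G VA VB) (virtualWeight G w VA VB) u x +
          wdist (inducedOn G VB) (fun a b => (w a b : ℕ∞)) x v := by
  have hu' : u ∉ VB ∨ u ∈ cutB G VA VB := hu.imp (fun h => Set.disjoint_left.1 hdisj h) id
  refine le_antisymm (le_iInf₂ fun x _ => ?_) ?_
  · exact (wdist_triangle u x v).trans
      (add_le_add (wdist_le_wdist_virtualA u x) (wdist_anti (inducedOn_le VB) x v))
  · refine (iInf₂_mono fun x hx => ?_).trans
      (iInf_wdist_add_wdist_inducedOn_le (fun _ _ => mem_cutB_of_adj hunion) hu' hv.1)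
    exact add_le_add_left (wdist_virtualA_le_wdist hunion hu' (.inr hx)) _

/-- for a finite weighted graph `G` whose vertices are partitioned
into `V_A ∪ V_B`, for every node `u ∈ V_A ∪ C_B` and every node `v ∈ V_B \ C_B`,
the weighted distance in `G` satisfies
`wdist_G(u, v) = min_{x ∈ C_B} (wdist_{G'_A}(u, x) + wdist_{G_B}(x, v))`
(the minimum over an empty set being `∞`). -/
theorem wdist_eq_min_over_cutB {V : Type*} [Fintype V]
    (G : SimpleGraph V) (w : V → V → ℕ) (hw : ∀ u v, w u v = w v u)
    (VA VB : Set V) (hdisj : Disjoint VA VB) (hunion : VA ∪ VB = Set.univ)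
    (u v : V) (hu : u ∈ VA ∪ cutB G VA VB) (hv : v ∈ VB \ cutB G VA VB) :
    wdist G (fun a b => (w a b : ℕ∞)) u v =
      ⨅ x ∈ cutB G VA VB,
        wdist (virtualA G VA VB) (virtualWeight G w VA VB) u x +
          wdist (inducedOn G VB) (fun a b => (w a b : ℕ∞)) x v :=
  wdist_eq_min_over_cutB_general G w VA VB hdisj hunion u v hu hv
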